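/- arXiv:0810.2514 — 3 statements merged into one kernel-verified Lean document; each statement's English description precedes it below -/
import Mathlib

section
/- Let G be a finite simple graph on a finite vertex type V that is a tree (connected and acyclic) in which every vertex has degree either 1 or 3, and suppose G has exactly n vertices of degree 1 with n ≥ 3. Then there exist a vertex v of degree 3 and two distinct vertices p₁ ≠ p₂, each of degree 1, such that both p₁ and p₂ are adjacent to v. -/
private lemma walk_stay {V : Type*} (G : SimpleGraph V) (S : Set V)
    (hS : ∀ x ∈ S, ∀ y, G.Adj x y → y ∈ S) :
    ∀ {a b : V}, G.Walk a b → a ∈ S → b ∈ S := by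
  intro a b w
  induction w with
  | nil => exact id
  | cons h _ ih => intro ha; exact ih (hS _ ha _ h)

/-- In a finite tree where all degrees are 1 or 3, with `n ≥ 3` leaves, there is
a degree-3 vertex adjacent to two distinct leaves. -/
theorem stmt_2 {V : Type*} [Fintype V] [DecidableEq V]
    (G : SimpleGraph V) [DecidableRel G.Adj]
    (hconn : G.Connected) (hacyc : G.IsAcyclic)
    (hdeg : ∀ v : V, G.degree v = 1 ∨ G.degree v = 3)
    (n : ℕ) (hn : 3 ≤ n)
    (hleaf : (Finset.univ.filter fun v : V => G.degree v = 1).card = n) :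
    ∃ (v p₁ p₂ : V), G.degree v = 3 ∧ p₁ ≠ p₂ ∧
      G.degree p₁ = 1 ∧ G.degree p₂ = 1 ∧ G.Adj v p₁ ∧ G.Adj v p₂ := by
  classical
  set L := Finset.univ.filter fun v : V => G.degree v = 1 with hL
  set I := Finset.univ.filter fun v : V => G.degree v = 3 with hI
  have htree : G.IsTree := ⟨hconn, hacyc⟩
  have hLI : Disjoint L I := by
    rw [Finset.disjoint_left]
    intro a ha ha'
    simp only [hL, hI, Finset.mem_filter] at ha ha'
    omega
  have hunion : L ∪ I = Finset.univ := by
    ext a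
    simp only [hL, hI, Finset.mem_union, Finset.mem_filter, Finset.mem_univ, true_and,
      iff_true]
    exact hdeg a
  have hcardV : Fintype.card V = n + I.card := by
    rw [← Finset.card_univ, ← hunion, Finset.card_union_of_disjoint hLI, hleaf]
  have hedges : G.edgeFinset.card + 1 = Fintype.card V := htree.card_edgeFinset
  have hsum : ∑ v, G.degree v = 2 * G.edgeFinset.card :=
    G.sum_degrees_eq_twice_card_edges
  have hsum2 : ∑ v, G.degree v = n + 3 * I.card := by
    rw [← hunion, Finset.sum_union hLI]
    have h1 : ∑ v ∈ L, G.degree v = n := by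
      rw [← hleaf]
      rw [Finset.card_eq_sum_ones]
      refine Finset.sum_congr rfl ?_
      intro x hx
      simp only [hL, Finset.mem_filter] at hx
      exact hx.2
    have h2 : ∑ v ∈ I, G.degree v = 3 * I.card := by
      rw [Finset.sum_congr rfl (fun x hx => by
        simp only [hI, Finset.mem_filter] at hx; exact hx.2)]
      simp [mul_comm]
    rw [h1, h2]
  have hIcard : I.card + 2 = n := by omega
  -- each leaf has a neighbor
  have hne : ∀ p ∈ L, (G.neighborFinset p).Nonempty := by
    intro p hp
    simp only [hL, Finset.mem_filter] at hp
    rw [← Finset.card_pos, ← SimpleGraph.degree, hp.2]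
    norm_num
  set f : V → V := fun v =>
    if h : (G.neighborFinset v).Nonempty then h.choose else v with hf
  have hadj : ∀ p ∈ L, G.Adj p (f p) := by
    intro p hp
    have h := hne p hp
    simp only [hf, dif_pos h]
    have := h.choose_spec
    rwa [SimpleGraph.mem_neighborFinset] at this
  -- the neighbor of a leaf is not a leaf
  have hmaps : ∀ p ∈ L, f p ∈ I := by
    intro p hp
    have hadjp := hadj p hp
    simp only [hI, Finset.mem_filter, Finset.mem_univ, true_and]
    rcases hdeg (f p) with h1 | h3
    · exfalso
      have hpdeg : G.degree p = 1 := by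
        simpa [hL, Finset.mem_filter] using hp
      -- neighborFinset p = {f p}, neighborFinset (f p) = {p}
      have hnp : G.neighborFinset p = {f p} := by
        have hmem : f p ∈ G.neighborFinset p :=
          (SimpleGraph.mem_neighborFinset G p (f p)).2 hadjp
        have hc : (G.neighborFinset p).card = 1 := hpdeg
        rcases Finset.card_eq_one.1 hc with ⟨a, ha⟩
        rw [ha] at hmem ⊢
        simp at hmem
        rw [hmem]
      have hnq : G.neighborFinset (f p) = {p} := by
        have hc : (G.neighborFinset (f p)).card = 1 := h1
        rcases Finset.card_eq_one.1 hc with ⟨a, ha⟩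
        have : p ∈ G.neighborFinset (f p) :=
          (SimpleGraph.mem_neighborFinset G (f p) p).2 hadjp.symm
        rw [ha] at this ⊢
        simp at this
        rw [this]
      -- the set {p, f p} is closed under adjacency
      set S : Set V := {p, f p} with hS
      have hclosed : ∀ x ∈ S, ∀ y, G.Adj x y → y ∈ S := by
        intro x hx y hxy
        rcases hx with rfl | hx
        · have : y ∈ G.neighborFinset x := (SimpleGraph.mem_neighborFinset G x y).2 hxy
          rw [hnp] at this
          simp at this
          simp [hS, this]
        · simp only [Set.mem_singleton_iff] at hx
          subst hx
          have : y ∈ G.neighborFinset (f p) :=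
            (SimpleGraph.mem_neighborFinset G (f p) y).2 hxy
          rw [hnq] at this
          simp at this
          simp [hS, this]
      -- find a third leaf
      have hcard3 : 3 ≤ L.card := by rw [hleaf]; exact hn
      have hc1 : 1 ≤ (L \ ({p, f p} : Finset V)).card := by
        have h := Finset.le_card_sdiff ({p, f p} : Finset V) L
        have h2 : ({p, f p} : Finset V).card ≤ 2 := Finset.card_insert_le _ _ |>.trans (by simp)
        omega
      obtain ⟨w, hw⟩ := Finset.card_pos.1 hc1
      simp only [Finset.mem_sdiff, Finset.mem_insert, Finset.mem_singleton] at hw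
      obtain ⟨hwL, hw2⟩ := hw
      push_neg at hw2
      obtain ⟨hwp, hwq⟩ := hw2
      obtain ⟨walk⟩ := hconn.preconnected p w
      have hwS : w ∈ S := walk_stay G S hclosed walk (by simp [hS])
      rcases hwS with h | h
      · exact hwp h
      · exact hwq h
    · exact h3
  -- pigeonhole
  have hlt : I.card < L.card := by rw [hleaf]; omega
  obtain ⟨p₁, hp₁, p₂, hp₂, hne12, heq⟩ :=
    Finset.exists_ne_map_eq_of_card_lt_of_maps_to hlt hmaps
  refine ⟨f p₁, p₁, p₂, ?_, hne12, ?_, ?_, ?_, ?_⟩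
  · have := hmaps p₁ hp₁
    simpa [hI, Finset.mem_filter] using this
  · simpa [hL, Finset.mem_filter] using hp₁
  · simpa [hL, Finset.mem_filter] using hp₂
  · exact (hadj p₁ hp₁).symm
  · rw [heq]; exact (hadj p₂ hp₂).symm
end

section
/- Let x ∈ ℝ², let r > 0, let t > 0, let η ∈ (0, t), and let O : ℝ → ℝ² be continuous. Then ∫₀ᵗ ( ∫_{B(O(s), r)} exp(−‖x−y‖²/(t−s)) dy ) / (t−s) ds ≤ π r² ( log t − log η ) + π η, where B(z, r) denotes the open Euclidean ball of center z and radius r in ℝ² and the integrals are Lebesgue integrals. -/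
/-!
Split the time integral at `t - η`. Far from the singular time the Gaussian is at most `1`, so the
inner integral is at most the area `π r²` of the ball and the integrand at most `π r² / (t - s)`,
which integrates to `π r² (log t - log η)`. Close to it, the inner integral is at most the full
Gaussian integral over the plane, `π (t - s)`, so the integrand is at most `π`.
-/

open MeasureTheory Real Metric Module

section GaussianKernel

lemma setIntegral_exp_neg_sq_norm_sub_div_le_measureReal {E : Type*} [SeminormedAddCommGroup E]
    [MeasurableSpace E] {μ : Measure E} {τ : ℝ} (hτ : 0 ≤ τ) (x : E) {S : Set E} (hS : μ S < ⊤) :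
    ∫ y in S, exp (-‖x - y‖ ^ 2 / τ) ∂μ ≤ μ.real S := by
  have hle : ∀ y ∈ S, ‖exp (-‖x - y‖ ^ 2 / τ)‖ ≤ 1 := fun y _ => by
    rw [norm_of_nonneg (exp_pos _).le, exp_le_one_iff]
    exact div_nonpos_of_nonpos_of_nonneg (neg_nonpos.2 (sq_nonneg _)) hτ
  simpa using (le_abs_self _).trans (norm_setIntegral_le_of_norm_le_const hS hle)

variable {V : Type*} [NormedAddCommGroup V] [InnerProductSpace ℝ V] [FiniteDimensional ℝ V]
  [MeasurableSpace V] [BorelSpace V]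

lemma integral_exp_neg_sq_norm_sub_div {τ : ℝ} (hτ : 0 < τ) (x : V) :
    ∫ y, exp (-‖x - y‖ ^ 2 / τ) = (π * τ) ^ (finrank ℝ V / 2 : ℝ) := by
  have hrw : ∀ y : V, exp (-‖x - y‖ ^ 2 / τ) = exp (-τ⁻¹ * ‖y - x‖ ^ 2) := fun y => by
    rw [norm_sub_rev, neg_div, div_eq_inv_mul, neg_mul]
  simp_rw [hrw]
  rw [integral_sub_right_eq_self (fun v : V => exp (-τ⁻¹ * ‖v‖ ^ 2)) x,
    GaussianFourier.integral_rexp_neg_mul_sq_norm (inv_pos.2 hτ), div_inv_eq_mul]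

lemma integrable_exp_neg_sq_norm_sub_div {τ : ℝ} (hτ : 0 < τ) (x : V) :
    Integrable fun y : V => exp (-‖x - y‖ ^ 2 / τ) :=
  Integrable.of_integral_ne_zero <| by
    rw [integral_exp_neg_sq_norm_sub_div hτ]
    exact (rpow_pos_of_pos (by positivity) _).ne'

lemma setIntegral_exp_neg_sq_norm_sub_div_le {τ : ℝ} (hτ : 0 < τ) (x : V) (S : Set V) :
    ∫ y in S, exp (-‖x - y‖ ^ 2 / τ) ≤ (π * τ) ^ (finrank ℝ V / 2 : ℝ) :=
  (setIntegral_le_integral (integrable_exp_neg_sq_norm_sub_div hτ x)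
    (.of_forall fun _ => (exp_pos _).le)).trans_eq (integral_exp_neg_sq_norm_sub_div hτ x)

end GaussianKernel

section Plane

lemma measureReal_ball_fin_two_le (z : EuclideanSpace ℝ (Fin 2)) (r : ℝ) :
    volume.real (ball z r) ≤ π * r ^ 2 := by
  rcases le_total r 0 with hr | hr
  · rw [ball_eq_empty.2 hr, measureReal_empty]
    positivity
  · rw [measureReal_def, EuclideanSpace.volume_ball_fin_two, ENNReal.toReal_mul,
      ENNReal.toReal_pow, ENNReal.toReal_ofReal hr, ENNReal.toReal_ofReal pi_nonneg, mul_comm]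

variable (x : EuclideanSpace ℝ (Fin 2)) {τ : ℝ}

lemma setIntegral_ball_exp_neg_sq_norm_sub_div_div_le (z : EuclideanSpace ℝ (Fin 2)) (r : ℝ)
    (hτ : 0 ≤ τ) :
    (∫ y in ball z r, exp (-‖x - y‖ ^ 2 / τ)) / τ ≤ π * r ^ 2 / τ := by
  gcongr
  exact (setIntegral_exp_neg_sq_norm_sub_div_le_measureReal hτ x measure_ball_lt_top).trans
    (measureReal_ball_fin_two_le z r)

-- At `τ = 0` the left-hand side is `0` by the convention `a / 0 = 0`.
lemma setIntegral_exp_neg_sq_norm_sub_div_div_le_pi (S : Set (EuclideanSpace ℝ (Fin 2)))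
    (hτ : 0 ≤ τ) :
    (∫ y in S, exp (-‖x - y‖ ^ 2 / τ)) / τ ≤ π := by
  rcases hτ.eq_or_lt with rfl | hτ
  · simpa using pi_nonneg
  rw [div_le_iff₀ hτ]
  simpa [finrank_euclideanSpace_fin] using setIntegral_exp_neg_sq_norm_sub_div_le hτ x S

end Plane

lemma intervalIntegrable_inv_sub_left {t η : ℝ} (hη : 0 < η) (hηt : η ≤ t) :
    IntervalIntegrable (fun s => (t - s)⁻¹) volume 0 (t - η) := by
  refine ((continuousOn_const.sub continuousOn_id).inv₀ fun s hs => ?_).intervalIntegrable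
  rw [Set.uIcc_of_le (sub_nonneg.2 hηt)] at hs
  exact (show 0 < t - s by linarith [hs.2]).ne'

lemma integral_inv_sub_left {t η : ℝ} (hη : 0 < η) (hηt : η ≤ t) :
    ∫ s in (0:ℝ)..t - η, (t - s)⁻¹ = log t - log η := by
  rw [intervalIntegral.integral_comp_sub_left (fun u => u⁻¹) t, sub_sub_cancel, sub_zero,
    integral_inv_of_pos hη (hη.trans_le hηt), log_div (hη.trans_le hηt).ne' hη.ne']

theorem stmt_8_general (x : EuclideanSpace ℝ (Fin 2)) (r t η : ℝ)
    (hη : η ∈ Set.Ioo 0 t)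
    (O : ℝ → EuclideanSpace ℝ (Fin 2)) :
    (∫ s in (0:ℝ)..t,
        (∫ y in Metric.ball (O s) r, Real.exp (-‖x - y‖ ^ 2 / (t - s))) / (t - s))
      ≤ Real.pi * r ^ 2 * (Real.log t - Real.log η) + Real.pi * η := by
  obtain ⟨hη0, hηt⟩ := hη
  set f := fun s => (∫ y in ball (O s) r, exp (-‖x - y‖ ^ 2 / (t - s))) / (t - s)
  have hlog : 0 ≤ log t - log η := sub_nonneg.2 (log_le_log hη0 hηt.le)
  by_cases hf : IntervalIntegrable f volume 0 t
  swap
  · rw [intervalIntegral.integral_undef hf]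
    positivity
  have hf₁ : IntervalIntegrable f volume 0 (t - η) :=
    hf.mono_set (Set.uIcc_subset_uIcc_left (Set.mem_uIcc_of_le (by linarith) (by linarith)))
  have hf₂ : IntervalIntegrable f volume (t - η) t :=
    hf.mono_set (Set.uIcc_subset_uIcc_right (Set.mem_uIcc_of_le (by linarith) (by linarith)))
  have hfar : ∫ s in (0:ℝ)..t - η, f s ≤ π * r ^ 2 * (log t - log η) := calc
    _ ≤ ∫ s in (0:ℝ)..t - η, π * r ^ 2 * (t - s)⁻¹ :=
      intervalIntegral.integral_mono_on (by linarith) hf₁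
        ((intervalIntegrable_inv_sub_left hη0 hηt.le).const_mul _) fun s hs =>
          setIntegral_ball_exp_neg_sq_norm_sub_div_div_le x _ r (by linarith [hs.2])
    _ = π * r ^ 2 * (log t - log η) := by
      rw [intervalIntegral.integral_const_mul, integral_inv_sub_left hη0 hηt.le]
  have hnear : ∫ s in t - η..t, f s ≤ π * η := calc
    _ ≤ ∫ _ in t - η..t, π :=
      intervalIntegral.integral_mono_on (by linarith) hf₂ intervalIntegrable_const fun s hs =>
        setIntegral_exp_neg_sq_norm_sub_div_div_le_pi x _ (by linarith [hs.2])
    _ = π * η := by simp [mul_comm]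
  rw [← intervalIntegral.integral_add_adjacent_intervals hf₁ hf₂]
  exact add_le_add hfar hnear

/-- Gaussian kernel estimate: splitting the time interval at `t - η`, the
time-weighted integral of the Gaussian over moving balls is bounded by
`π r² (log t - log η) + π η`. -/
theorem stmt_8 (x : EuclideanSpace ℝ (Fin 2)) (r t η : ℝ)
    (hr : 0 < r) (ht : 0 < t) (hη : η ∈ Set.Ioo 0 t)
    (O : ℝ → EuclideanSpace ℝ (Fin 2)) (hO : Continuous O) :
    (∫ s in (0:ℝ)..t,
        (∫ y in Metric.ball (O s) r, Real.exp (-‖x - y‖ ^ 2 / (t - s))) / (t - s))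
      ≤ Real.pi * r ^ 2 * (Real.log t - Real.log η) + Real.pi * η :=
  stmt_8_general x r t η hη O
end

section
/- Let ρ be a real number with 1/2 < ρ < 1 and let T > 0. Then there exist constants C > 0 and ε₀ ∈ (0, 1) such that for every ε ∈ (0, ε₀), every x ∈ ℝ², every continuous O : ℝ → ℝ², and every t ∈ (0, T]: (1/ε) · ∫₀ᵗ ( ∫_{B(O(s), ε^ρ/2)} exp(−‖x−y‖²/(t−s)) dy ) / (t−s) ds ≤ C · ε^{2ρ−1} · (1 + log(1/ε)), where B(z, r) denotes the open Euclidean ball of center z and radius r in ℝ² and the integrals are Lebesgue integrals. In particular, since ρ > 1/2, the left-hand side tends to 0 as ε → 0, uniformly in x, O, and t ∈ (0, T]. -/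
/-!
For `s < t` the inner integral is bounded both by the full Gaussian integral `π (t - s)` and by
the area `π ε^{2ρ} / 4` of the ball, so the integrand in `s` is at most `min (π, ε^{2ρ} / (t - s))`.
Integrating the first bound over `[t - ε^{2ρ}, t]` and the second over `[0, t - ε^{2ρ}]` gives
`ε^{2ρ} (π + log (t / ε^{2ρ}))`, which is `O(ε^{2ρ} (1 + log (1/ε)))` uniformly in `t ≤ T`.
-/

open MeasureTheory Real Set Metric

section Gaussian

variable {V : Type*} [NormedAddCommGroup V] [InnerProductSpace ℝ V] [FiniteDimensional ℝ V]
  [MeasurableSpace V] [BorelSpace V]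

theorem integral_exp_neg_sq_dist_div (x : V) {τ : ℝ} (hτ : 0 < τ) :
    ∫ y : V, exp (-‖x - y‖ ^ 2 / τ) = (π * τ) ^ (Module.finrank ℝ V / 2 : ℝ) := by
  have h := integral_sub_left_eq_self (fun v : V ↦ exp (-τ⁻¹ * ‖v‖ ^ 2)) volume x
  have h' := GaussianFourier.integral_rexp_neg_mul_sq_norm (V := V) (inv_pos.2 hτ)
  simp only [neg_mul, inv_mul_eq_div, neg_div, div_inv_eq_mul] at h h' ⊢
  rw [h, h']

theorem integrable_exp_neg_sq_dist_div (x : V) {τ : ℝ} (hτ : 0 < τ) :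
    Integrable fun y : V ↦ exp (-‖x - y‖ ^ 2 / τ) :=
  .of_integral_ne_zero <| by rw [integral_exp_neg_sq_dist_div x hτ]; positivity

theorem setIntegral_exp_neg_sq_dist_div_le (x : V) (s : Set V) {τ : ℝ} (hτ : 0 < τ) :
    ∫ y in s, exp (-‖x - y‖ ^ 2 / τ) ≤ (π * τ) ^ (Module.finrank ℝ V / 2 : ℝ) :=
  (setIntegral_le_integral (integrable_exp_neg_sq_dist_div x hτ)
    (.of_forall fun _ ↦ (exp_pos _).le)).trans_eq (integral_exp_neg_sq_dist_div x hτ)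

theorem setIntegral_exp_neg_sq_dist_div_le_measureReal (x : V) {s : Set V}
    (hs : volume s ≠ ⊤) {τ : ℝ} (hτ : 0 ≤ τ) :
    ∫ y in s, exp (-‖x - y‖ ^ 2 / τ) ≤ volume.real s := by
  have hle_one : ∀ y ∈ s, ‖exp (-‖x - y‖ ^ 2 / τ)‖ ≤ 1 := fun y _ ↦ by
    rw [norm_of_nonneg (exp_pos _).le, exp_le_one_iff]
    exact div_nonpos_of_nonpos_of_nonneg (neg_nonpos.2 (sq_nonneg _)) hτ
  simpa using (le_abs_self _).trans (norm_setIntegral_le_of_norm_le_const hs.lt_top hle_one)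

end Gaussian

theorem EuclideanSpace.volume_real_ball_fin_two (x : EuclideanSpace ℝ (Fin 2)) {r : ℝ}
    (hr : 0 ≤ r) : volume.real (ball x r) = π * r ^ 2 := by
  simp [Measure.real, ENNReal.toReal_ofReal hr, pi_nonneg, mul_comm]

theorem intervalIntegral_inv_const_sub {a b t : ℝ} (ha : 0 < t - a) (hb : 0 < t - b) :
    ∫ s in a..b, (t - s)⁻¹ = log ((t - a) / (t - b)) := by
  rw [intervalIntegral.integral_comp_sub_left (fun x ↦ x⁻¹), integral_inv_of_pos hb ha]

theorem intervalIntegral_le_of_le_const_of_le_div_sub {f : ℝ → ℝ} {t A δ : ℝ} (ht : 0 ≤ t)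
    (hδ : 0 < δ) (hA : 0 ≤ A) (hf : IntervalIntegrable f volume 0 t)
    (hfA : ∀ s ∈ Ioo 0 t, f s ≤ A) (hfδ : ∀ s ∈ Ioo 0 t, f s ≤ δ / (t - s)) :
    ∫ s in 0..t, f s ≤ δ * (A + max 0 (log (t / δ))) := by
  have hconst {a : ℝ} (ha : 0 ≤ a) (hat : a ≤ t) (hfa : IntervalIntegrable f volume a t) :
      ∫ s in a..t, f s ≤ (t - a) * A := by
    simpa using intervalIntegral.integral_mono_on_of_le_Ioo hat hfa intervalIntegrable_const
      fun s hs ↦ hfA s ⟨ha.trans_lt hs.1, hs.2⟩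
  rcases le_or_gt t δ with htδ | hδt
  · calc ∫ s in 0..t, f s ≤ (t - 0) * A := hconst le_rfl ht hf
      _ ≤ δ * (A + max 0 (log (t / δ))) := by nlinarith [le_max_left 0 (log (t / δ))]
  set c := t - δ with hc
  have hc0 : 0 ≤ c := by linarith
  have hct : c ≤ t := by linarith
  have hf₁ : IntervalIntegrable f volume 0 c := hf.mono_set (uIcc_subset_uIcc_left (by
    rw [uIcc_of_le ht]; exact ⟨hc0, hct⟩))
  have hf₂ : IntervalIntegrable f volume c t := hf.mono_set (uIcc_subset_uIcc_right (by
    rw [uIcc_of_le ht]; exact ⟨hc0, hct⟩))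
  have hpos : ∀ s ∈ uIcc 0 c, 0 < t - s := fun s hs ↦ by
    rw [uIcc_of_le hc0] at hs; linarith [hs.2]
  have hg : IntervalIntegrable (fun s ↦ δ * (t - s)⁻¹) volume 0 c :=
    (continuousOn_const.mul (continuousOn_const.sub continuousOn_id |>.inv₀
      fun s hs ↦ (hpos s hs).ne')).intervalIntegrable
  have hfar : ∫ s in 0..c, f s ≤ δ * log (t / δ) := by
    calc ∫ s in 0..c, f s ≤ ∫ s in 0..c, δ * (t - s)⁻¹ :=
          intervalIntegral.integral_mono_on_of_le_Ioo hc0 hf₁ hg fun s hs ↦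
            (hfδ s ⟨hs.1, hs.2.trans_le hct⟩).trans_eq (div_eq_mul_inv _ _)
      _ = δ * log (t / δ) := by
          rw [intervalIntegral.integral_const_mul, intervalIntegral_inv_const_sub (by linarith)
            (by linarith), sub_zero, hc, sub_sub_cancel]
  have hnear : ∫ s in c..t, f s ≤ δ * A := by
    simpa [hc] using hconst hc0 hct hf₂
  rw [← intervalIntegral.integral_add_adjacent_intervals hf₁ hf₂]
  nlinarith [le_max_right 0 (log (t / δ))]

theorem stmt_12_general (ρ T : ℝ) (hρ1 : ρ < 1) :
    ∃ C > (0:ℝ), ∃ ε₀ ∈ Set.Ioo (0:ℝ) 1, ∀ ε ∈ Set.Ioo (0:ℝ) ε₀,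
      ∀ x : EuclideanSpace ℝ (Fin 2),
      ∀ O : ℝ → EuclideanSpace ℝ (Fin 2), Continuous O →
      ∀ t ∈ Set.Ioc (0:ℝ) T,
        (1 / ε) *
          (∫ s in (0:ℝ)..t,
            (∫ y in Metric.ball (O s) (ε ^ ρ / 2),
              Real.exp (-‖x - y‖ ^ 2 / (t - s))) / (t - s))
          ≤ C * ε ^ (2 * ρ - 1) * (1 + Real.log (1 / ε)) := by
  refine ⟨|log T| + 2 + π, by positivity, 1 / 2, by norm_num, ?_⟩
  rintro ε ⟨hε, hε2⟩ x O - t ⟨ht, htT⟩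
  set f := fun s ↦ (∫ y in ball (O s) (ε ^ ρ / 2), exp (-‖x - y‖ ^ 2 / (t - s))) / (t - s)
  have hL : 0 < log (1 / ε) := log_pos (by rw [lt_div_iff₀ hε]; linarith)
  by_cases hf : IntervalIntegrable f volume 0 t
  swap
  · rw [intervalIntegral.integral_undef hf, mul_zero]
    positivity
  set δ := ε ^ (2 * ρ)
  have hδ : 0 < δ := rpow_pos_of_pos hε _
  have hball : π * (ε ^ ρ / 2) ^ 2 ≤ δ := by
    rw [div_pow, ← rpow_natCast, ← rpow_mul hε.le, mul_comm ρ]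
    nlinarith [pi_le_four]
  have hfπ : ∀ s ∈ Ioo 0 t, f s ≤ π := fun s hs ↦ by
    rw [div_le_iff₀ (sub_pos.2 hs.2)]
    simpa using setIntegral_exp_neg_sq_dist_div_le x (ball (O s) (ε ^ ρ / 2)) (sub_pos.2 hs.2)
  have hfδ : ∀ s ∈ Ioo 0 t, f s ≤ δ / (t - s) := fun s hs ↦ by
    refine div_le_div_of_nonneg_right ?_ (sub_pos.2 hs.2).le
    refine (setIntegral_exp_neg_sq_dist_div_le_measureReal x measure_ball_lt_top.ne
      (sub_pos.2 hs.2).le).trans ?_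
    rwa [EuclideanSpace.volume_real_ball_fin_two _ (by positivity)]
  have hlog : log (t / δ) ≤ |log T| + 2 * log (1 / ε) := by
    rw [log_div ht.ne' hδ.ne', log_rpow hε, one_div, log_inv]
    nlinarith [(log_le_log ht htT).trans (le_abs_self (log T)), log_neg hε (by linarith)]
  calc (1 / ε) * ∫ s in 0..t, f s
      ≤ (1 / ε) * (δ * (π + max 0 (log (t / δ)))) := by
        gcongr
        exact intervalIntegral_le_of_le_const_of_le_div_sub ht.le hδ pi_nonneg hf hfπ hfδ
    _ ≤ ε ^ (2 * ρ - 1) * (π + (|log T| + 2 * log (1 / ε))) := by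
        rw [← mul_assoc, rpow_sub hε, rpow_one, one_div_mul_eq_div]
        gcongr
        exact max_le (by positivity) hlog
    _ ≤ (|log T| + 2 + π) * ε ^ (2 * ρ - 1) * (1 + log (1 / ε)) := by
        have : 0 < ε ^ (2 * ρ - 1) := rpow_pos_of_pos hε _
        nlinarith [abs_nonneg (log T), pi_pos, mul_pos this hL]

/-- Estimate (bd1): for `1/2 < ρ < 1` and `t ∈ (0, T]`, the (1/ε)-weighted
Gaussian integral over the moving balls of radius `ε^ρ/2` is bounded by
`C ε^{2ρ-1} (1 + log(1/ε))`, uniformly in `x`, `O`, and `t`. -/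
theorem stmt_12 (ρ T : ℝ) (hρ : 1 / 2 < ρ) (hρ1 : ρ < 1) (hT : 0 < T) :
    ∃ C > (0:ℝ), ∃ ε₀ ∈ Set.Ioo (0:ℝ) 1, ∀ ε ∈ Set.Ioo (0:ℝ) ε₀,
      ∀ x : EuclideanSpace ℝ (Fin 2),
      ∀ O : ℝ → EuclideanSpace ℝ (Fin 2), Continuous O →
      ∀ t ∈ Set.Ioc (0:ℝ) T,
        (1 / ε) *
          (∫ s in (0:ℝ)..t,
            (∫ y in Metric.ball (O s) (ε ^ ρ / 2),
              Real.exp (-‖x - y‖ ^ 2 / (t - s))) / (t - s))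
          ≤ C * ε ^ (2 * ρ - 1) * (1 + Real.log (1 / ε)) :=
  stmt_12_general ρ T hρ1
end
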